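/- arXiv:2603.06015 — 2 statements merged into one kernel-verified Lean document; each statement's English description precedes it below -/
import Mathlib

section
/- Let α, β ∈ ℂ, γ ∈ ℂ^×, and let Q ⊆ {0,1} be nonempty. Then for every s ≥ 1, all l, m ∈ ℤ and every u ∈ A(α,β,γ,Q), one has Ω^{(1,1,s)}_{l,m} · u = 0 (hence the same holds on every subquotient of A(α,β,γ,Q), in particular on its unique irreducible subquotient A'(α,β,γ,Q)). -/
open Finsupp TensorProduct

attribute [local instance 100] LieRing.ofAssociativeRing

/-! ### Abstract presentation of the twisted Heisenberg-Virasoro algebra -/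

/-- The twisted Heisenberg-Virasoro algebra: a complex Lie algebra with basis
`{L n, I n, CL, CLI, CI : n ∈ ℤ}` and the prescribed brackets. -/
structure TwistedHV where
  T : Type
  [lieRing : LieRing T]
  [lieAlg : LieAlgebra ℂ T]
  L : ℤ → T
  I : ℤ → T
  CL : T
  CLI : T
  CI : T
  basis : Module.Basis (ℤ ⊕ ℤ ⊕ Fin 3) ℂ T
  basis_eq : ∀ x, basis x = Sum.elim L (Sum.elim I ![CL, CLI, CI]) x
  bracket_LL : ∀ m n : ℤ,
    ⁅L m, L n⁆ = ((n : ℂ) - (m : ℂ)) • L (m + n) +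
      (if m + n = 0 then (((m : ℂ) ^ 3 - (m : ℂ)) / 12) • CL else 0)
  bracket_LI : ∀ m n : ℤ,
    ⁅L m, I n⁆ = (n : ℂ) • I (m + n) +
      (if m + n = 0 then ((m : ℂ) ^ 2 + (m : ℂ)) • CLI else 0)
  bracket_II : ∀ m n : ℤ,
    ⁅I m, I n⁆ = if m + n = 0 then (m : ℂ) • CI else 0
  central_CL : ∀ x : T, ⁅CL, x⁆ = 0
  central_CLI : ∀ x : T, ⁅CLI, x⁆ = 0
  central_CI : ∀ x : T, ⁅CI, x⁆ = 0

attribute [instance] TwistedHV.lieRing TwistedHV.lieAlg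

/-- The gap-`p` Virasoro algebra: `Lg n` represents `L_{p n}`, `Ig m` represents `I_m`
for `m` not divisible by `p`, and `Cg j` represents the central element `C_j` for
`0 ≤ j ≤ ⌊p/2⌋`. -/
structure GapVirasoro (p : ℕ) where
  g : Type
  [lieRing : LieRing g]
  [lieAlg : LieAlgebra ℂ g]
  Lg : ℤ → g
  Ig : ℤ → g
  Cg : ℕ → g
  basis : Module.Basis (ℤ ⊕ {m : ℤ // ¬ ((p : ℤ) ∣ m)} ⊕ {j : ℕ // j ≤ p / 2}) ℂ g
  basis_eq : ∀ x, basis x = Sum.elim Lg (Sum.elim (fun m => Ig m.1) (fun j => Cg j.1)) x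
  bracket_LL : ∀ m n : ℤ,
    ⁅Lg m, Lg n⁆ = ((p : ℂ) * ((n : ℂ) - (m : ℂ))) • Lg (m + n) +
      (if m + n = 0 then (((m : ℂ) ^ 3 - (m : ℂ)) / 12) • Cg 0 else 0)
  bracket_LI : ∀ m b : ℤ, ¬ ((p : ℤ) ∣ b) →
    ⁅Lg m, Ig b⁆ = (b : ℂ) • Ig ((p : ℤ) * m + b)
  bracket_II : ∀ a b : ℤ, ¬ ((p : ℤ) ∣ a) → ¬ ((p : ℤ) ∣ b) →
    ⁅Ig a, Ig b⁆ =
      if a + b = 0 then (a : ℂ) • Cg (min ((a % (p : ℤ)).toNat) (p - (a % (p : ℤ)).toNat)) else 0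
  central_C : ∀ j : ℕ, j ≤ p / 2 → ∀ x : g, ⁅Cg j, x⁆ = 0

attribute [instance] GapVirasoro.lieRing GapVirasoro.lieAlg

/-- The mirror Heisenberg-Virasoro algebra: `h n` represents `h_{n + 1/2}`. -/
structure MirrorHV where
  M : Type
  [lieRing : LieRing M]
  [lieAlg : LieAlgebra ℂ M]
  d : ℤ → M
  h : ℤ → M
  c : M
  l : M
  basis : Module.Basis (ℤ ⊕ ℤ ⊕ Fin 2) ℂ M
  basis_eq : ∀ x, basis x = Sum.elim d (Sum.elim h ![c, l]) x
  bracket_dd : ∀ m n : ℤ,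
    ⁅d m, d n⁆ = ((m : ℂ) - (n : ℂ)) • d (m + n) +
      (if m + n = 0 then (((m : ℂ) ^ 3 - (m : ℂ)) / 12) • c else 0)
  bracket_dh : ∀ m n : ℤ, ⁅d m, h n⁆ = (-((n : ℂ) + 1 / 2)) • h (m + n)
  bracket_hh : ∀ m n : ℤ,
    ⁅h m, h n⁆ = if m + n + 1 = 0 then ((m : ℂ) + 1 / 2) • l else 0
  central_c : ∀ x : M, ⁅c, x⁆ = 0
  central_l : ∀ x : M, ⁅l, x⁆ = 0

attribute [instance] MirrorHV.lieRing MirrorHV.lieAlg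

/-! ### Representations of the subalgebras `𝔗ₙ` -/

/-- A module over the subalgebra `𝔗ₙ = span{L k, I (n+k) : k ∈ ℕ}` of the twisted
Heisenberg-Virasoro algebra, encoded through the action operators (`IV m` is only
meaningful, and only constrained, for `m ≥ n`). -/
structure THVRep (n : ℕ) where
  V : Type
  [addCommGroup : AddCommGroup V]
  [module : Module ℂ V]
  LV : ℕ → Module.End ℂ V
  IV : ℕ → Module.End ℂ V
  comm_LL : ∀ k l : ℕ, ⁅LV k, LV l⁆ = ((l : ℂ) - (k : ℂ)) • LV (k + l)
  comm_LI : ∀ k l : ℕ, n ≤ l → ⁅LV k, IV l⁆ = (l : ℂ) • IV (k + l)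
  comm_II : ∀ k l : ℕ, n ≤ k → n ≤ l → ⁅IV k, IV l⁆ = 0

attribute [instance] THVRep.addCommGroup THVRep.module

namespace THVRep

variable {n : ℕ}

/-- A `𝔗ₙ`-module is restricted if every vector is annihilated by `L m` and `I m`
for all sufficiently large `m`. -/
def Restricted (R : THVRep n) : Prop :=
  ∀ v : R.V, ∃ N : ℕ, ∀ m : ℕ, N ≤ m → R.LV m v = 0 ∧ R.IV m v = 0

/-- `V` has annihilating level `(h, q)` (with `h ≥ n`). -/
def AnnLevel (R : THVRep n) (h q : ℕ) : Prop :=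
  n ≤ h ∧ (∃ v : R.V, R.IV h v ≠ 0) ∧ (∃ v : R.V, R.LV q v ≠ 0) ∧
    (∀ k : ℕ, h < k → ∀ v : R.V, R.IV k v = 0) ∧
    (∀ k : ℕ, q < k → ∀ v : R.V, R.LV k v = 0)

/-- Irreducibility of a `𝔗ₙ`-module. -/
def IsSimple (R : THVRep n) : Prop :=
  (∃ v : R.V, v ≠ 0) ∧
  ∀ W : Submodule ℂ R.V,
    (∀ k : ℕ, ∀ v ∈ W, R.LV k v ∈ W) →
    (∀ m : ℕ, n ≤ m → ∀ v ∈ W, R.IV m v ∈ W) →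
    W = ⊥ ∨ W = ⊤

end THVRep

/-- Isomorphism of `𝔗_r`-modules (both sides regarded as `𝔗_r`-modules by restriction). -/
def RepIso {n₁ n₂ : ℕ} (R : THVRep n₁) (S : THVRep n₂) (r : ℕ) : Prop :=
  ∃ ψ : R.V ≃ₗ[ℂ] S.V,
    (∀ k : ℕ, ∀ v : R.V, ψ (R.LV k v) = S.LV k (ψ v)) ∧
    (∀ m : ℕ, r ≤ m → ∀ v : R.V, ψ (R.IV m v) = S.IV m (ψ v))

/-- `min {d i : i ∈ P}` (junk value `0` if `P = ∅`). -/
def finsetMin (P : Finset ℕ) (d : ℕ → ℕ) : ℕ :=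
  if h : P.Nonempty then P.inf' h d else 0

/-- `min (d 0, …, d (p-1))`. -/
def dmin (p : ℕ) (d : ℕ → ℕ) : ℕ := finsetMin (Finset.range p) d

/-- The set `P - P = {(i - j) mod p : i, j ∈ P}`. -/
def PdiffP (p : ℕ) (P : Finset ℕ) : Finset ℕ :=
  Finset.image₂ (fun i j : ℕ => (((i : ℤ) - (j : ℤ)) % (p : ℤ)).toNat) P P

/-- The index set `𝒫 = {k ∈ ℤ : k mod p ∈ P}`. -/
def PIdx (p : ℕ) (P : Finset ℕ) : Type :=
  {k : ℤ // ((k % (p : ℤ)).toNat) ∈ P}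

lemma mem_shift {P : Finset ℕ} {q r k : ℤ} (h : (((r + k) % q).toNat) ∈ P) (m : ℤ) :
    (((q * m + r + k) % q).toNat) ∈ P := by
  have e : q * m + r + k = r + k + m * q := by ring
  rw [e, Int.add_mul_emod_self_right]
  exact h

lemma mem_shift0 {P : Finset ℕ} {q k : ℤ} (h : ((k % q).toNat) ∈ P) (m : ℤ) :
    (((q * m + k) % q).toNat) ∈ P := by
  have e : q * m + k = k + m * q := by ring
  rw [e, Int.add_mul_emod_self_right]
  exact h

/-- Shift of an index `k ∈ 𝒫` by `p * m`. -/
def shiftIdx0 {p : ℕ} {P : Finset ℕ} (k : PIdx p P) (m : ℤ) : PIdx p P :=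
  ⟨(p : ℤ) * m + k.1, mem_shift0 k.2 m⟩

/-! ### Representations, irreducibility and isomorphism -/

/-- Irreducibility of a representation `ρ` of a complex Lie algebra. -/
def IsIrreducibleRep {g : Type} [LieRing g] [LieAlgebra ℂ g]
    {M : Type} [AddCommGroup M] [Module ℂ M]
    (ρ : g →ₗ⁅ℂ⁆ Module.End ℂ M) : Prop :=
  (∃ w : M, w ≠ 0) ∧
  ∀ W : Submodule ℂ M, (∀ x : g, ∀ w ∈ W, ρ x w ∈ W) → W = ⊥ ∨ W = ⊤

/-- Isomorphism of two representations of the same complex Lie algebra. -/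
def RepModIso {g : Type} [LieRing g] [LieAlgebra ℂ g]
    {M₁ M₂ : Type} [AddCommGroup M₁] [Module ℂ M₁] [AddCommGroup M₂] [Module ℂ M₂]
    (ρ₁ : g →ₗ⁅ℂ⁆ Module.End ℂ M₁) (ρ₂ : g →ₗ⁅ℂ⁆ Module.End ℂ M₂) : Prop :=
  ∃ φ : M₁ ≃ₗ[ℂ] M₂, ∀ (x : g) (w : M₁), φ (ρ₁ x w) = ρ₂ x (φ w)

/-- The action formulas defining the `𝔗`-module `M(V, a, d)` on `V ⊗ ℂ[x^{±1}] = ℤ →₀ V`. -/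
def IsTHVAction (T : TwistedHV) (p : ℕ) (d : ℕ → ℕ) (a : ℂ) {n : ℕ} (R : THVRep n)
    (ρ : T.T →ₗ⁅ℂ⁆ Module.End ℂ (ℤ →₀ R.V)) : Prop :=
  (∀ (m k : ℤ) (v : R.V),
    ρ (T.L m) (Finsupp.single k v) =
      (a + (k : ℂ)) • Finsupp.single (m + k) v +
      ∑ᶠ j : ℕ, (((m : ℂ) ^ (j + 1)) / ((j + 1).factorial : ℂ)) •
        Finsupp.single (m + k) (R.LV j v)) ∧
  (∀ (b k : ℤ) (v : R.V),
    ρ (T.I b) (Finsupp.single k v) =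
      ∑ᶠ j : ℕ, (((b : ℂ) ^ (j + d ((b % (p : ℤ)).toNat))) /
          ((j + d ((b % (p : ℤ)).toNat)).factorial : ℂ)) •
        Finsupp.single (b + k) (R.IV (j + d ((b % (p : ℤ)).toNat)) v)) ∧
  ρ T.CL = 0 ∧ ρ T.CLI = 0 ∧ ρ T.CI = 0

/-- The action formulas defining the `𝔤`-module `M(V, a, d, P)` on `V ⊗ ℂ[P]`. -/
def IsGapAction {p : ℕ} (G : GapVirasoro p) (P : Finset ℕ) (d : ℕ → ℕ) (a : ℂ)
    {n : ℕ} (R : THVRep n)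
    (ρ : G.g →ₗ⁅ℂ⁆ Module.End ℂ (PIdx p P →₀ R.V)) : Prop :=
  (∀ (m : ℤ) (k : PIdx p P) (v : R.V),
    ρ (G.Lg m) (Finsupp.single k v) =
      (a + (k.1 : ℂ)) • Finsupp.single (shiftIdx0 k m) v +
      ∑ᶠ j : ℕ, (((((p : ℤ) * m : ℤ) : ℂ) ^ (j + 1)) / ((j + 1).factorial : ℂ)) •
        Finsupp.single (shiftIdx0 k m) (R.LV j v)) ∧
  (∀ (m : ℤ) (i : ℕ), 1 ≤ i → i ≤ p - 1 → ∀ (k : PIdx p P) (v : R.V),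
    ρ (G.Ig ((p : ℤ) * m + (i : ℤ))) (Finsupp.single k v) =
      if h : ((((i : ℤ) + k.1) % (p : ℤ)).toNat) ∈ P then
        ∑ᶠ j : ℕ, (((((p : ℤ) * m + (i : ℤ) : ℤ) : ℂ) ^ (j + d i)) / ((j + d i).factorial : ℂ)) •
          Finsupp.single (⟨(p : ℤ) * m + (i : ℤ) + k.1, mem_shift h m⟩ : PIdx p P)
            (R.IV (j + d i) v)
      else 0) ∧
  (∀ j : ℕ, j ≤ p / 2 → ρ (G.Cg j) = 0)

/-- The operator `Ω^{(i,j,s)}_{l,m}` as an element of the universal enveloping algebra. -/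
noncomputable def OmegaU (T : TwistedHV) (p : ℕ) (i j : ℕ) (l m : ℤ) (s : ℕ) :
    UniversalEnvelopingAlgebra ℂ T.T :=
  ∑ k ∈ Finset.range (s + 1),
    ((-1 : ℂ) ^ (s - k) * (s.choose k : ℂ)) •
      ((UniversalEnvelopingAlgebra.ι ℂ (T.I ((p : ℤ) * l - (p : ℤ) * m - (p : ℤ) * k + (i : ℤ)))) *
       (UniversalEnvelopingAlgebra.ι ℂ (T.I ((p : ℤ) * m + (p : ℤ) * k + (j : ℤ)))))

/-- The action of the operator `Ω^{(i,j,s)}_{l,m}` in a representation `ρ`, where `Iop`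
is the family of elements `I_n`. -/
noncomputable def OmegaOp {g : Type} [LieRing g] [LieAlgebra ℂ g]
    {M : Type} [AddCommGroup M] [Module ℂ M]
    (ρ : g →ₗ⁅ℂ⁆ Module.End ℂ M) (Iop : ℤ → g) (p : ℕ) (i j : ℕ) (l m : ℤ) (s : ℕ) :
    Module.End ℂ M :=
  ∑ k ∈ Finset.range (s + 1),
    ((-1 : ℂ) ^ (s - k) * (s.choose k : ℂ)) •
      (ρ (Iop ((p : ℤ) * l - (p : ℤ) * m - (p : ℤ) * k + (i : ℤ))) *
       ρ (Iop ((p : ℤ) * m + (p : ℤ) * k + (j : ℤ))))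

/-- The module of intermediate series `A(α, β, γ, Q)` over the gap-2 Virasoro algebra. -/
def IsARep (G : GapVirasoro 2) (α β γ : ℂ) (Q : Finset ℕ)
    (ρ : G.g →ₗ⁅ℂ⁆ Module.End ℂ (PIdx 2 Q →₀ ℂ)) : Prop :=
  (∀ (m : ℤ) (k : PIdx 2 Q),
    ρ (G.Lg m) (Finsupp.single k (1 : ℂ)) =
      (α + 2 * β * (m : ℂ) + (k.1 : ℂ)) • Finsupp.single (shiftIdx0 k m) (1 : ℂ)) ∧
  (∀ (m : ℤ) (k : PIdx 2 Q),
    ρ (G.Ig (((2 : ℕ) : ℤ) * m + 1) ) (Finsupp.single k (1 : ℂ)) =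
      if h : (((1 + k.1) % ((2 : ℕ) : ℤ)).toNat) ∈ Q then
        (if k.1 % 2 = 0 then (1 : ℂ) else γ) •
          Finsupp.single (⟨((2 : ℕ) : ℤ) * m + 1 + k.1, mem_shift h m⟩ : PIdx 2 Q) (1 : ℂ)
      else 0) ∧
  ρ (G.Cg 0) = 0 ∧ ρ (G.Cg 1) = 0

/-- An irreducible highest weight representation of the gap-2 Virasoro algebra of level
`(c, h, l)`, i.e. a copy of `L(c, h, l)`. -/
def IsHWRep {HW : Type} [AddCommGroup HW] [Module ℂ HW]
    (G : GapVirasoro 2) (c h l : ℂ) (ρ : G.g →ₗ⁅ℂ⁆ Module.End ℂ HW) : Prop :=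
  IsIrreducibleRep ρ ∧
  ∃ w₀ : HW, w₀ ≠ 0 ∧ ρ (G.Lg 0) w₀ = h • w₀ ∧
    ρ (G.Cg 0) w₀ = c • w₀ ∧ ρ (G.Cg 1) w₀ = l • w₀ ∧
    (∀ m : ℕ, 1 ≤ m → ρ (G.Lg (m : ℤ)) w₀ = 0 ∧ ρ (G.Ig (2 * (m : ℤ) - 1)) w₀ = 0)

/-- `ρ₂` is a subquotient of `ρ₁`: there is an invariant submodule `W` and an
equivariant surjection `W → M₂`. -/
def IsSubquotientRep {g : Type} [LieRing g] [LieAlgebra ℂ g]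
    {M₁ M₂ : Type} [AddCommGroup M₁] [Module ℂ M₁] [AddCommGroup M₂] [Module ℂ M₂]
    (ρ₁ : g →ₗ⁅ℂ⁆ Module.End ℂ M₁) (ρ₂ : g →ₗ⁅ℂ⁆ Module.End ℂ M₂) : Prop :=
  ∃ W : Submodule ℂ M₁, ∃ hW : ∀ x : g, ∀ w ∈ W, ρ₁ x w ∈ W,
    ∃ π : W →ₗ[ℂ] M₂, Function.Surjective π ∧
      ∀ (x : g) (w : M₁) (hw : w ∈ W), π ⟨ρ₁ x w, hW x w hw⟩ = ρ₂ x (π ⟨w, hw⟩)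

/-!
On `A(α, β, γ, Q)` the product `I_{2a+1} I_{2b+1}` sends `v_k` to a multiple of
`v_{k + 2(a+b+1)}` whose coefficient depends on `k` only, so the product depends on `a + b`
alone. All summands of `Ω^{(1,1,s)}_{l,m}` have the same index sum, hence `Ω^{(1,1,s)}_{l,m}`
acts as `∑ₖ (-1)^(s-k) C(s,k) = (1 - 1)^s = 0` times a fixed operator.
-/

theorem sum_range_neg_one_pow_sub_mul_choose {R : Type*} [CommRing R] {s : ℕ} (hs : s ≠ 0) :
    ∑ k ∈ Finset.range (s + 1), (-1 : R) ^ (s - k) * (s.choose k : R) = 0 := by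
  simpa [zero_pow hs] using (add_pow (1 : R) (-1) s).symm

theorem OmegaOp_eq_zero_of_mul_eq_of_add_eq {g : Type} [LieRing g] [LieAlgebra ℂ g]
    {M : Type} [AddCommGroup M] [Module ℂ M]
    (ρ : g →ₗ⁅ℂ⁆ Module.End ℂ M) (Iop : ℤ → g) (p i j : ℕ) (l m : ℤ) {s : ℕ} (hs : s ≠ 0)
    (h : ∀ a b a' b' : ℤ, a + b = a' + b' →
      ρ (Iop (p * a + i)) * ρ (Iop (p * b + j)) = ρ (Iop (p * a' + i)) * ρ (Iop (p * b' + j))) :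
    OmegaOp ρ Iop p i j l m s = 0 := by
  have hk : ∀ k : ℕ, ρ (Iop (p * l - p * m - p * k + i)) * ρ (Iop (p * m + p * k + j)) =
      ρ (Iop (p * (l - m) + i)) * ρ (Iop (p * m + j)) := fun k => by
    convert h (l - m - k) (m + k) (l - m) m (by ring) using 4 <;> ring
  simp only [OmegaOp, hk, ← Finset.sum_smul, sum_range_neg_one_pow_sub_mul_choose hs, zero_smul]

namespace IsARep

variable {G : GapVirasoro 2} {α β γ : ℂ} {Q : Finset ℕ}
  {ρ : G.g →ₗ⁅ℂ⁆ Module.End ℂ (PIdx 2 Q →₀ ℂ)}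

theorem Ig_apply_Ig_apply_single (hρ : IsARep G α β γ Q ρ) (a b : ℤ) (k : PIdx 2 Q) :
    ρ (G.Ig ((2 : ℕ) * a + 1)) (ρ (G.Ig ((2 : ℕ) * b + 1)) (single k 1)) =
      if ((1 + k.1) % (2 : ℕ)).toNat ∈ Q then
        ((if k.1 % 2 = 0 then (1 : ℂ) else γ) * (if (1 + k.1) % 2 = 0 then 1 else γ)) •
          single (shiftIdx0 k (a + b + 1)) 1
      else 0 := by
  obtain ⟨-, hI, -⟩ := hρ
  rw [hI b k]
  by_cases h₁ : ((1 + k.1) % (2 : ℕ)).toNat ∈ Q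
  · rw [dif_pos h₁, if_pos h₁]
    -- `PIdx` is a plain `def`, so the coercions `k.1` only typecheck up to unfolding it: hence `erw`.
    erw [map_smul, hI a]
    have h₂ : ((1 + ((2 : ℕ) * b + 1 + k.1)) % (2 : ℕ)).toNat ∈ Q := by
      have hparity : (1 + ((2 : ℕ) * b + 1 + k.1)) % (2 : ℕ) = k.1 % (2 : ℕ) := by omega
      exact hparity ▸ k.2
    erw [dif_pos h₂, smul_smul]
    congr 2
    · have hparity : ((2 : ℕ) * b + 1 + k.1) % 2 = (1 + k.1) % 2 := by omega
      exact if_congr (Iff.of_eq (congrArg (· = 0) hparity)) rfl rfl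
    · exact Subtype.ext (by simp only [shiftIdx0]; ring)
  · rw [dif_neg h₁, if_neg h₁]
    erw [map_zero]

theorem Ig_mul_Ig_eq_of_add_eq (hρ : IsARep G α β γ Q ρ) {a b a' b' : ℤ} (hab : a + b = a' + b') :
    ρ (G.Ig ((2 : ℕ) * a + 1)) * ρ (G.Ig ((2 : ℕ) * b + 1)) =
      ρ (G.Ig ((2 : ℕ) * a' + 1)) * ρ (G.Ig ((2 : ℕ) * b' + 1)) :=
  Finsupp.lhom_ext' fun k => LinearMap.ext_ring <| by
    simp only [LinearMap.comp_apply, lsingle_apply, Module.End.mul_apply, Ig_apply_Ig_apply_single hρ, hab]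

end IsARep

theorem omega_annihilates_intermediate_series_general (G : GapVirasoro 2)
    (α β γ : ℂ)
    (Q : Finset ℕ)
    (ρ : G.g →ₗ⁅ℂ⁆ Module.End ℂ (PIdx 2 Q →₀ ℂ)) (hρ : IsARep G α β γ Q ρ)
    (s : ℕ) (hs : 1 ≤ s) (l m : ℤ) (u : PIdx 2 Q →₀ ℂ) :
    OmegaOp ρ G.Ig 2 1 1 l m s u = 0 := by
  rw [OmegaOp_eq_zero_of_mul_eq_of_add_eq ρ G.Ig 2 1 1 l m (by omega)
    (fun a b a' b' hab => by simpa using hρ.Ig_mul_Ig_eq_of_add_eq hab),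
    LinearMap.zero_apply]

/-- for every `s ≥ 1` and all `l, m ∈ ℤ`, the operator `Ω^{(1,1,s)}_{l,m}`
annihilates the module of intermediate series `A(α, β, γ, Q)` over the gap-2 Virasoro
algebra (hence also every subquotient of it, in particular `A'(α, β, γ, Q)`). -/
theorem omega_annihilates_intermediate_series (G : GapVirasoro 2)
    (α β γ : ℂ) (hγ : γ ≠ 0)
    (Q : Finset ℕ) (hQ : Q.Nonempty) (hQsub : Q ⊆ Finset.range 2)
    (ρ : G.g →ₗ⁅ℂ⁆ Module.End ℂ (PIdx 2 Q →₀ ℂ)) (hρ : IsARep G α β γ Q ρ)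
    (s : ℕ) (hs : 1 ≤ s) (l m : ℤ) (u : PIdx 2 Q →₀ ℂ) :
    OmegaOp ρ G.Ig 2 1 1 l m s u = 0 :=
  omega_annihilates_intermediate_series_general G α β γ Q ρ hρ s hs l m u
end

section
/- Let a ∈ ℂ, d = (d_0,…,d_{p−1}) ∈ {0,1}^p, let V be an irreducible 𝔗_{min(d_0,…,d_{p−1})}-module with annihilating level (h, q) for some h, q ∈ ℕ, and let f = Σ_i a_i x^i ∈ ℂ[x^{±1}]. Then the operations L_m ∘ w = L_m · w + Σ_i a_i (I_{m+i} · w), I_m ∘ w = I_m · w, and C_L, C_LI, C_I acting as 0, where · denotes the action on M(V, a, d), define a new 𝔗-module structure M^f(V, a, d) on V ⊗ ℂ[x^{±1}], and the 𝔗-module M^f(V, a, d) is irreducible. -/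
open Finsupp TensorProduct

attribute [instance 100] LieRing.ofAssociativeRing

/-!
Twisting by `f` only adds to `L_m` combinations of the `I_n`, which commute with each other, so
`M^f(V, a, d)` is again a module, and it has the same submodules as `M(V, a, d)`.

Let `W ≠ 0` be a submodule of `M(V, a, d)`. Since `L_0` acts on `V ⊗ x^k` by `a + k`, `W` is
graded: `W = ⊕ U_k ⊗ x^k`. The actions of `L_m` and `I_b` on `v ⊗ x^k` are polynomial in `m`
and `b`, so extracting coefficients shows that `Y = ⋂ U_k` is a `𝔗_{min d}`-submodule of `V`.
It is nonzero: for `v ∈ U_k` the top coefficient in `m` of `I_{t-pm} I_{pm} (v ⊗ x^k)` is a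
multiple of `I_h I_h v ⊗ x^{k+t}`, and `I_h` is injective on the simple module `V`.
Hence `Y = V` and `W` is everything.
-/

open Polynomial in
theorem Submodule.sum_coeff_smul_mem_of_infinite {K V ι : Type*} [Field K] [AddCommGroup V]
    [Module K V] (N : Submodule K V) {S : Set K} (hS : S.Infinite) (s : Finset ι)
    (P : ι → K[X]) (g : ι → V) (hN : ∀ c ∈ S, ∑ i ∈ s, (P i).eval c • g i ∈ N) (n : ℕ) :
    ∑ i ∈ s, (P i).coeff n • g i ∈ N := by
  rw [← Submodule.Quotient.mk_eq_zero, ← Module.forall_dual_apply_eq_zero_iff K]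
  intro φ
  let Q : K[X] := ∑ i ∈ s, φ (N.mkQ (g i)) • P i
  have hQ : Q = 0 := by
    refine Q.eq_zero_of_infinite_isRoot (hS.mono fun c hc => ?_)
    have h0 : φ (N.mkQ (∑ i ∈ s, (P i).eval c • g i)) = 0 := by
      rw [N.mkQ_apply, (Submodule.Quotient.mk_eq_zero N).mpr (hN c hc), map_zero]
    simpa [Q, eval_finsetSum, mul_comm] using h0
  have h1 := congrArg (coeff · n) hQ
  simp only [Q, finsetSum_coeff, coeff_smul, smul_eq_mul, coeff_zero] at h1
  rw [← N.mkQ_apply]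
  simpa [mul_comm] using h1

theorem Submodule.mem_of_sum_pow_smul_mem {K V ι : Type*} [Field K] [AddCommGroup V]
    [Module K V] (N : Submodule K V) {S : Set K} (hS : S.Infinite) {s : Finset ι}
    {e : ι → ℕ} (he : Set.InjOn e s) {g : ι → V} (hN : ∀ c ∈ S, ∑ i ∈ s, c ^ e i • g i ∈ N)
    {i : ι} (hi : i ∈ s) : g i ∈ N := by
  have := N.sum_coeff_smul_mem_of_infinite hS s (fun i => Polynomial.X ^ e i) g
    (by simpa using hN) (e i)
  rwa [Finset.sum_eq_single_of_mem i hi fun j hj hji => by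
    rw [Polynomial.coeff_X_pow, if_neg (fun h => hji (he hj hi h.symm)), zero_smul],
    Polynomial.coeff_X_pow, if_pos rfl, one_smul] at this

theorem Submodule.mem_of_sum_pow_div_factorial_smul_mem {K V ι : Type*} [Field K] [CharZero K]
    [AddCommGroup V] [Module K V] (N : Submodule K V) {S : Set K} (hS : S.Infinite) {s : Finset ι}
    {e : ι → ℕ} (he : Set.InjOn e s) {g : ι → V}
    (hN : ∀ c ∈ S, ∑ i ∈ s, (c ^ e i / (e i).factorial) • g i ∈ N) {i : ι} (hi : i ∈ s) :
    g i ∈ N := by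
  have := N.mem_of_sum_pow_smul_mem hS he (g := fun i => ((e i).factorial : K)⁻¹ • g i)
    (by simpa only [div_eq_mul_inv, mul_smul] using hN) hi
  exact (N.smul_mem_iff (inv_ne_zero (by exact_mod_cast (e i).factorial_ne_zero))).mp this

open Polynomial in
theorem Polynomial.coeff_C_sub_X_pow_mul_X_pow {R : Type*} [CommRing R] (t : R) {i j n : ℕ}
    (hi : i ≤ n) (hj : j ≤ n) :
    ((C t - X) ^ i * X ^ j).coeff (n + n) = if i = n ∧ j = n then (-1) ^ n else 0 := by
  split_ifs with H
  · rw [H.1, H.2]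
    have := coeff_pow_of_natDegree_le (m := n) (p := C t - X) (by compute_degree : _ ≤ 1)
    simpa [coeff_mul_X_pow] using this
  · refine natDegree_lt_coeff_mul ((add_le_add (natDegree_pow_le_of_le i
      (by compute_degree : (C t - X).natDegree ≤ 1)) (natDegree_X_pow_le j)).trans_lt ?_)
    omega

open Finsupp in
theorem Submodule.single_apply_mem_of_diagonal {ι K V : Type*} [Field K] [AddCommGroup V]
    [Module K V] (W : Submodule K (ι →₀ V)) {D : Module.End K (ι →₀ V)} {μ : ι → K}
    (hμ : Function.Injective μ) (hD : ∀ i v, D (single i v) = μ i • single i v)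
    (hW : ∀ w ∈ W, D w ∈ W) {w : ι →₀ V} (hw : w ∈ W) (i : ι) : single i (w i) ∈ W := by
  classical
  have hD_apply : ∀ (w : ι →₀ V) i, D w i = μ i • w i := by
    intro w
    induction w using Finsupp.induction_linear with
    | zero => simp
    | add u u' hu hu' => simp [hu, hu']
    | single j v => intro i; rw [hD]; by_cases hij : j = i <;> simp [hij]
  suffices ∀ s : Finset ι, ∀ w ∈ W, w.support ⊆ s → ∀ i, single i (w i) ∈ W from
    this _ w hw subset_rfl i
  intro s
  induction s using Finset.induction_on with
  | empty => rintro w - hw i; simp_all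
  | insert j s hj ih =>
    intro w hw hws i
    -- `D - μ j` kills the `j`-component and rescales the others by `μ i - μ j ≠ 0`.
    let w' := D w - μ j • w
    have hw'_apply : ∀ i, w' i = (μ i - μ j) • w i := fun i => by simp [w', hD_apply, sub_smul]
    have hw' : ∀ i, single i (w' i) ∈ W := ih w' (W.sub_mem (hW w hw) (W.smul_mem _ hw))
      (fun i hi => by
        have hi' := mem_support_iff.mp hi
        rw [hw'_apply] at hi'
        rcases Finset.mem_insert.mp (hws (mem_support_iff.mpr (right_ne_zero_of_smul hi')))
          with rfl | h
        · simp at hi'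
        · exact h)
    have hne : ∀ i ≠ j, single i (w i) ∈ W := fun i hij => by
      simpa [hw'_apply, ← smul_single, W.smul_mem_iff (sub_ne_zero.mpr (hμ.ne hij))] using hw' i
    by_cases hij : i = j
    · subst hij
      have hsum : w = ∑ k ∈ insert i s, single k (w k) :=
        (sum_single w).symm.trans (sum_of_support_subset w hws single fun _ _ => single_zero _)
      rw [Finset.sum_insert hj] at hsum
      rw [eq_sub_of_add_eq hsum.symm]
      exact W.sub_mem hw (W.sum_mem fun k hk => hne k (ne_of_mem_of_not_mem hk hj))
    · exact hne i hij

lemma Int.toNat_mul_add_emod {p i : ℕ} (hi : i < p) (m : ℤ) :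
    (((p : ℤ) * m + i) % p).toNat = i := by
  rw [Int.mul_add_emod_self_left, Int.emod_eq_of_lt (by omega) (by omega), Int.toNat_natCast]

lemma infinite_range_intCast_mul_add {K : Type*} [AddGroupWithOne K] [CharZero K] {p : ℕ}
    (hp : 0 < p) (r : ℤ) : (Set.range fun m : ℤ => ((p * m + r : ℤ) : K)).Infinite :=
  Set.infinite_range_of_injective fun x y hxy => by
    simpa [hp.ne'] using Int.cast_injective hxy

lemma exists_lt_eq_dmin {p : ℕ} (hp : 0 < p) (d : ℕ → ℕ) : ∃ i < p, d i = dmin p d := by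
  have hne : (Finset.range p).Nonempty := Finset.nonempty_range_iff.mpr hp.ne'
  obtain ⟨i, hi, hid⟩ := Finset.exists_mem_eq_inf' hne d
  exact ⟨i, Finset.mem_range.mp hi, by rw [dmin, finsetMin, dif_pos hne, hid]⟩

theorem LinearMap.map_lie_of_basis {R L L' ι : Type*} [CommRing R] [LieRing L] [LieAlgebra R L]
    [LieRing L'] [LieAlgebra R L'] (F : L →ₗ[R] L') (b : Module.Basis ι R L)
    (h : ∀ i j, F ⁅b i, b j⁆ = ⁅F (b i), F (b j)⁆) (x y : L) : F ⁅x, y⁆ = ⁅F x, F y⁆ := by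
  let B₁ : L →ₗ[R] L →ₗ[R] L' := LinearMap.mk₂ R (fun x y => F ⁅x, y⁆)
    (by simp [add_lie]) (by simp [smul_lie]) (by simp [lie_add]) (by simp [lie_smul])
  let B₂ : L →ₗ[R] L →ₗ[R] L' := LinearMap.mk₂ R (fun x y => ⁅F x, F y⁆)
    (by simp [add_lie]) (by simp [smul_lie]) (by simp [lie_add]) (by simp [lie_smul])
  have : B₁ = B₂ := b.ext fun i => b.ext fun j => h i j
  exact LinearMap.congr_fun₂ this x y

namespace TwistedHV

variable (T : TwistedHV)

@[simp] lemma basis_inl (m : ℤ) : T.basis (.inl m) = T.L m := by simp [T.basis_eq]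
@[simp] lemma basis_inr_inl (m : ℤ) : T.basis (.inr (.inl m)) = T.I m := by simp [T.basis_eq]

lemma basis_inr_inr (c : Fin 3) : T.basis (.inr (.inr c)) = ![T.CL, T.CLI, T.CI] c := by
  simp [T.basis_eq]

lemma lie_basis_inr_inr (c : Fin 3) (x : T.T) : ⁅T.basis (.inr (.inr c)), x⁆ = 0 := by
  rw [basis_inr_inr]
  fin_cases c
  exacts [T.central_CL x, T.central_CLI x, T.central_CI x]

variable {T} {L' : Type*} [LieRing L'] [LieAlgebra ℂ L'] (ρ : T.T →ₗ⁅ℂ⁆ L')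

lemma map_lie_L_L (hCL : ρ T.CL = 0) (m n : ℤ) :
    ⁅ρ (T.L m), ρ (T.L n)⁆ = ((n : ℂ) - m) • ρ (T.L (m + n)) := by
  rw [← LieHom.map_lie, T.bracket_LL]
  split_ifs <;> simp [hCL]

lemma map_lie_L_I (hCLI : ρ T.CLI = 0) (m n : ℤ) :
    ⁅ρ (T.L m), ρ (T.I n)⁆ = (n : ℂ) • ρ (T.I (m + n)) := by
  rw [← LieHom.map_lie, T.bracket_LI]
  split_ifs <;> simp [hCLI]

lemma map_lie_I_I (hCI : ρ T.CI = 0) (m n : ℤ) : ⁅ρ (T.I m), ρ (T.I n)⁆ = 0 := by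
  rw [← LieHom.map_lie, T.bracket_II]
  split_ifs <;> simp [hCI]

lemma map_I_eq_zero_of_map_I_eq_zero (hCLI : ρ T.CLI = 0) {b : ℤ} (hb : b ≠ 0)
    (h0 : ρ (T.I b) = 0) (c : ℤ) : ρ (T.I c) = 0 := by
  have := map_lie_L_I ρ hCLI (c - b) b
  rw [h0, lie_zero, sub_add_cancel, eq_comm, smul_eq_zero] at this
  exact this.resolve_left (by exact_mod_cast hb)

noncomputable def twistLinear (f : ℤ →₀ ℂ) : T.T →ₗ[ℂ] L' :=
  T.basis.constr ℂ <| Sum.elim (fun m => ρ (T.L m) + ∑ i ∈ f.support, f i • ρ (T.I (m + i)))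
    (Sum.elim (fun b => ρ (T.I b)) 0)

variable (f : ℤ →₀ ℂ)

@[simp] lemma twistLinear_L (m : ℤ) :
    twistLinear ρ f (T.L m) = ρ (T.L m) + ∑ i ∈ f.support, f i • ρ (T.I (m + i)) := by
  conv_lhs => rw [← basis_inl]
  exact T.basis.constr_basis ℂ _ _

@[simp] lemma twistLinear_I (b : ℤ) : twistLinear ρ f (T.I b) = ρ (T.I b) := by
  conv_lhs => rw [← basis_inr_inl]
  exact T.basis.constr_basis ℂ _ _

lemma twistLinear_basis_inr_inr (c : Fin 3) : twistLinear ρ f (T.basis (.inr (.inr c))) = 0 := by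
  rw [twistLinear, Module.Basis.constr_basis, Sum.elim_inr, Sum.elim_inr, Pi.zero_apply]

@[simp] lemma twistLinear_CL : twistLinear ρ f T.CL = 0 := by
  simpa [basis_inr_inr] using twistLinear_basis_inr_inr ρ f 0
@[simp] lemma twistLinear_CLI : twistLinear ρ f T.CLI = 0 := by
  simpa [basis_inr_inr] using twistLinear_basis_inr_inr ρ f 1
@[simp] lemma twistLinear_CI : twistLinear ρ f T.CI = 0 := by
  simpa [basis_inr_inr] using twistLinear_basis_inr_inr ρ f 2

variable {ρ}

lemma twistLinear_map_lie_L_L (hCL : ρ T.CL = 0) (hCLI : ρ T.CLI = 0) (hCI : ρ T.CI = 0)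
    (m n : ℤ) :
    twistLinear ρ f ⁅T.L m, T.L n⁆ = ⁅twistLinear ρ f (T.L m), twistLinear ρ f (T.L n)⁆ := by
  have hIL : ∀ b c : ℤ, ⁅ρ (T.I b), ρ (T.L c)⁆ = -((b : ℂ) • ρ (T.I (c + b))) := fun b c => by
    rw [← lie_skew, map_lie_L_I ρ hCLI]
  simp only [T.bracket_LL, map_add, map_smul, twistLinear_L, lie_add, add_lie, lie_sum, sum_lie,
    lie_smul, smul_lie, map_lie_L_L ρ hCL, map_lie_L_I ρ hCLI, map_lie_I_I ρ hCI, hIL]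
  split_ifs <;> simp only [map_smul, twistLinear_CL, smul_zero, map_zero, add_zero, smul_add,
    Finset.smul_sum, Finset.sum_const_zero, smul_neg, Finset.sum_neg_distrib]
  all_goals
    rw [add_assoc, neg_add_eq_sub, ← Finset.sum_sub_distrib]
    refine congrArg _ (Finset.sum_congr rfl fun i _ => ?_)
    rw [show n + (m + i) = m + n + i by ring, show m + (n + i) = m + n + i by ring]
    push_cast
    module

lemma twistLinear_map_lie_L_I (hCLI : ρ T.CLI = 0) (hCI : ρ T.CI = 0) (m b : ℤ) :
    twistLinear ρ f ⁅T.L m, T.I b⁆ = ⁅twistLinear ρ f (T.L m), twistLinear ρ f (T.I b)⁆ := by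
  simp only [T.bracket_LI, map_add, map_smul, twistLinear_L, twistLinear_I, add_lie, sum_lie,
    smul_lie, map_lie_L_I ρ hCLI, map_lie_I_I ρ hCI, smul_zero, Finset.sum_const_zero, add_zero]
  split_ifs <;> simp

lemma twistLinear_map_lie (hCL : ρ T.CL = 0) (hCLI : ρ T.CLI = 0) (hCI : ρ T.CI = 0)
    (x y : T.T) : twistLinear ρ f ⁅x, y⁆ = ⁅twistLinear ρ f x, twistLinear ρ f y⁆ := by
  have central_right : ∀ x c, twistLinear ρ f ⁅x, T.basis (.inr (.inr c))⁆ =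
      ⁅twistLinear ρ f x, twistLinear ρ f (T.basis (.inr (.inr c)))⁆ := fun x c => by
    rw [← lie_skew, lie_basis_inr_inr, twistLinear_basis_inr_inr]
    simp
  refine (twistLinear ρ f).map_lie_of_basis T.basis (fun i j => ?_) x y
  rcases i with m | a | c
  · rcases j with n | b | c
    · simpa using twistLinear_map_lie_L_L f hCL hCLI hCI m n
    · simpa using twistLinear_map_lie_L_I f hCLI hCI m b
    · exact central_right _ c
  · rcases j with n | b | c
    · simp only [basis_inl, basis_inr_inl]
      rw [← lie_skew, map_neg, twistLinear_map_lie_L_I f hCLI hCI, lie_skew]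
    · simp only [basis_inr_inl, T.bracket_II, twistLinear_I, map_lie_I_I ρ hCI]
      split_ifs <;> simp
    · exact central_right _ c
  · rw [lie_basis_inr_inr, twistLinear_basis_inr_inr]
    simp

/-- The twist `M^f` of the representation `ρ` by `f ∈ ℂ[x^{±1}]`. -/
noncomputable def twist (hCL : ρ T.CL = 0) (hCLI : ρ T.CLI = 0) (hCI : ρ T.CI = 0) :
    T.T →ₗ⁅ℂ⁆ L' :=
  { twistLinear ρ f with map_lie' := twistLinear_map_lie f hCL hCLI hCI _ _ }

@[simp] lemma twist_apply (hCL : ρ T.CL = 0) (hCLI : ρ T.CLI = 0) (hCI : ρ T.CI = 0) (x : T.T) :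
    twist f hCL hCLI hCI x = twistLinear ρ f x := rfl

end TwistedHV

namespace THVRep

variable {n : ℕ} {R : THVRep n}

lemma IV_LV_apply {h : ℕ} (hnh : n ≤ h) (k : ℕ) (v : R.V) :
    R.IV h (R.LV k v) = R.LV k (R.IV h v) - (h : ℂ) • R.IV (k + h) v := by
  have := LinearMap.congr_fun (R.comm_LI k h hnh) v
  rw [Ring.lie_def] at this
  simp only [LinearMap.sub_apply, Module.End.mul_apply, LinearMap.smul_apply] at this
  rw [← this, sub_sub_cancel]

lemma IV_IV_comm {k l : ℕ} (hk : n ≤ k) (hl : n ≤ l) (v : R.V) :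
    R.IV k (R.IV l v) = R.IV l (R.IV k v) := by
  have := LinearMap.congr_fun (R.comm_II k l hk hl) v
  rwa [Ring.lie_def, LinearMap.sub_apply, LinearMap.zero_apply, sub_eq_zero] at this

lemma injective_IV_of_annLevel (hR : R.IsSimple) {h q : ℕ} (hlev : R.AnnLevel h q) :
    Function.Injective (R.IV h) := by
  obtain ⟨hnh, ⟨v₀, hv₀⟩, -, hI, -⟩ := hlev
  refine LinearMap.ker_eq_bot.mp <|
    (hR.2 _ (fun k v hv => ?_) (fun s hs v hv => ?_)).resolve_right fun htop => hv₀ ?_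
  · rw [LinearMap.mem_ker] at hv ⊢
    rw [IV_LV_apply hnh, hv, map_zero, zero_sub, neg_eq_zero]
    rcases k.eq_zero_or_pos with rfl | hk
    · rw [zero_add, hv, smul_zero]
    · rw [hI (k + h) (by omega), smul_zero]
  · rw [LinearMap.mem_ker] at hv ⊢
    rw [IV_IV_comm hnh hs, hv, map_zero]
  · exact LinearMap.mem_ker.mp (htop ▸ Submodule.mem_top)

end THVRep

namespace IsTHVAction

open Finsupp Finset Nat

variable {T : TwistedHV} {p : ℕ} {d : ℕ → ℕ} {a : ℂ} {n : ℕ} {R : THVRep n}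
  {ρ : T.T →ₗ⁅ℂ⁆ Module.End ℂ (ℤ →₀ R.V)}

lemma L_zero_single (hρ : IsTHVAction T p d a R ρ) (k : ℤ) (v : R.V) :
    ρ (T.L 0) (single k v) = (a + k) • single k v := by
  simp [hρ.1]

lemma L_single (hρ : IsTHVAction T p d a R ρ) {q : ℕ} (hq : ∀ j, q < j → ∀ v, R.LV j v = 0)
    (m k : ℤ) (v : R.V) :
    ρ (T.L m) (single k v) = (a + k) • single (m + k) v +
      single (m + k) (∑ j ∈ range (q + 1), ((m : ℂ) ^ (j + 1) / (j + 1)!) • R.LV j v) := by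
  rw [hρ.1, finsum_eq_sum_of_support_subset _ (s := range (q + 1)) fun j hj => ?_,
    single_finsetSum]
  · simp_rw [smul_single]
  · by_contra hjq
    simp [hq j (by simpa using hjq)] at hj

lemma I_single (hρ : IsTHVAction T p d a R ρ) {h : ℕ} (hh : ∀ s, h < s → ∀ v, R.IV s v = 0)
    (b k : ℤ) (v : R.V) :
    ρ (T.I b) (single k v) =
      single (b + k) (∑ s ∈ Ico (d (b % p).toNat) (h + 1), ((b : ℂ) ^ s / s !) • R.IV s v) := by
  obtain ⟨δ, hδ⟩ : ∃ δ, d (b % p).toNat = δ := ⟨_, rfl⟩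
  rw [hρ.2.1, hδ, finsum_eq_sum_of_support_subset _ (s := range (h + 1 - δ)) fun j hj => ?_,
    sum_Ico_eq_sum_range, single_finsetSum]
  · simp_rw [smul_single, add_comm δ]
  · by_contra hjh
    exact hj (by simp only [hh (j + δ) (by simp at hjh; omega), smul_zero, single_zero])

section

variable {W : Submodule ℂ (ℤ →₀ R.V)}

lemma single_apply_mem (hρ : IsTHVAction T p d a R ρ) (hWL : ∀ w ∈ W, ρ (T.L 0) w ∈ W)
    {w : ℤ →₀ R.V} (hw : w ∈ W) (k : ℤ) : single k (w k) ∈ W :=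
  W.single_apply_mem_of_diagonal ((add_right_injective a).comp Int.cast_injective)
    hρ.L_zero_single hWL hw k

lemma single_LV_mem (hρ : IsTHVAction T p d a R ρ) {q : ℕ}
    (hq : ∀ j, q < j → ∀ v, R.LV j v = 0) (hWL : ∀ m, ∀ w ∈ W, ρ (T.L m) w ∈ W)
    {v : R.V} (hv : ∀ k, single k v ∈ W) (j : ℕ) (k : ℤ) : single k (R.LV j v) ∈ W := by
  rcases lt_or_ge q j with hjq | hjq
  · simp [hq j hjq, W.zero_mem]
  suffices R.LV j v ∈ W.comap (lsingle k) by simpa using this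
  refine (W.comap (lsingle k)).mem_of_sum_pow_div_factorial_smul_mem (g := fun j => R.LV j v)
    (Set.infinite_range_of_injective Int.cast_injective) succ_injective.injOn
    (Set.forall_mem_range.mpr fun m => ?_) (mem_range.mpr (Nat.lt_add_one_of_le hjq))
  have := hWL m _ (hv (k - m))
  rw [hρ.L_single hq, add_sub_cancel] at this
  simp only [Submodule.mem_comap, lsingle_apply]
  exact (W.add_mem_iff_right (W.smul_mem _ (hv k))).mp this

lemma single_IV_mem (hp : 0 < p) (hρ : IsTHVAction T p d a R ρ) {h : ℕ}
    (hh : ∀ s, h < s → ∀ v, R.IV s v = 0) (hWI : ∀ b, ∀ w ∈ W, ρ (T.I b) w ∈ W)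
    {v : R.V} (hv : ∀ k, single k v ∈ W) {s : ℕ} (hs : dmin p d ≤ s) (k : ℤ) :
    single k (R.IV s v) ∈ W := by
  rcases lt_or_ge h s with hsh | hsh
  · simp [hh s hsh, W.zero_mem]
  obtain ⟨i, hi, hid⟩ := exists_lt_eq_dmin hp d
  suffices R.IV s v ∈ W.comap (lsingle k) by simpa using this
  refine (W.comap (lsingle k)).mem_of_sum_pow_div_factorial_smul_mem (g := fun s => R.IV s v)
    (infinite_range_intCast_mul_add hp i) (Set.injOn_id _)
    (Set.forall_mem_range.mpr fun m => ?_) (mem_Ico.mpr ⟨hid ▸ hs, Nat.lt_add_one_of_le hsh⟩)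
  have := hWI (p * m + i) _ (hv (k - (p * m + i)))
  rw [hρ.I_single hh, add_sub_cancel, Int.toNat_mul_add_emod hi] at this
  simpa only [Submodule.mem_comap, lsingle_apply, id] using this

open Polynomial in
lemma single_IV_IV_mem (hp : 0 < p) (hρ : IsTHVAction T p d a R ρ) {h : ℕ}
    (hh : ∀ s, h < s → ∀ v, R.IV s v = 0) (hdh : ∀ i < p, d i ≤ h)
    (hWI : ∀ b, ∀ w ∈ W, ρ (T.I b) w ∈ W) {k : ℤ} {v : R.V} (hv : single k v ∈ W) (k' : ℤ) :
    single k' (R.IV h (R.IV h v)) ∈ W := by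
  set t := k' - k
  let P : ℕ × ℕ → ℂ[X] := fun x => (C (t : ℂ) - X) ^ x.1 * X ^ x.2
  let g : ℕ × ℕ → R.V := fun x => ((x.1 ! * x.2 ! : ℕ) : ℂ)⁻¹ • R.IV x.1 (R.IV x.2 v)
  let s := Ico (d (t % p).toNat) (h + 1) ×ˢ Ico (d 0) (h + 1)
  -- `I_{t-pm} I_{pm}` maps `v ⊗ x^k` to degree `k'`, polynomially in `pm`, with top
  -- coefficient `(-1)^h (h!)⁻² I_h I_h v`.
  have hP : ∀ c ∈ Set.range fun m : ℤ => ((p * m : ℤ) : ℂ),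
      ∑ x ∈ s, (P x).eval c • g x ∈ W.comap (lsingle k') := by
    refine Set.forall_mem_range.mpr fun m => ?_
    have := hWI (t - p * m) _ (hWI (p * m) _ hv)
    rw [hρ.I_single hh, hρ.I_single hh, show t - p * m + (p * m + k) = k' by omega,
      Int.mul_emod_right, Int.sub_mul_emod_self_left, Int.toNat_zero] at this
    show single k' _ ∈ W
    convert this using 3
    rw [sum_product]
    refine sum_congr rfl fun s' _ => ?_
    rw [map_sum, Finset.smul_sum]
    refine sum_congr rfl fun s _ => ?_
    simp only [P, g, map_smul, eval_mul, eval_pow, eval_sub, eval_C, eval_X]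
    push_cast
    module
  have htop := (W.comap (lsingle k')).sum_coeff_smul_mem_of_infinite
    (by simpa using infinite_range_intCast_mul_add (K := ℂ) hp 0) s P g hP (h + h)
  rw [sum_eq_single_of_mem (h, h) (mem_product.mpr ⟨mem_Ico.mpr ⟨hdh _ ?_, lt_add_one h⟩,
      mem_Ico.mpr ⟨hdh 0 hp, lt_add_one h⟩⟩) fun x hx hxh => ?_] at htop
  · simp only [P, g, coeff_C_sub_X_pow_mul_X_pow _ le_rfl le_rfl, and_self, if_true,
      smul_smul] at htop
    have hc : ((-1 : ℂ) ^ h * ((h ! * h ! : ℕ) : ℂ)⁻¹) ≠ 0 := by simp [factorial_ne_zero]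
    exact ((W.comap (lsingle k')).smul_mem_iff hc).mp htop
  · have := Int.emod_lt_of_pos t (Int.natCast_pos.mpr hp)
    have := Int.emod_nonneg t (Int.natCast_ne_zero.mpr hp.ne')
    omega
  · obtain ⟨hx₁, hx₂⟩ := mem_product.mp hx
    rw [coeff_C_sub_X_pow_mul_X_pow _ (Nat.le_of_lt_succ (mem_Ico.mp hx₁).2)
      (Nat.le_of_lt_succ (mem_Ico.mp hx₂).2), if_neg fun H => hxh (Prod.ext H.1 H.2), zero_smul]

end

section

variable {R : THVRep (dmin p d)} {ρ : T.T →ₗ⁅ℂ⁆ Module.End ℂ (ℤ →₀ R.V)}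

lemma d_le_of_annLevel (hp : 0 < p) (hρ : IsTHVAction T p d a R ρ) {h q : ℕ}
    (hlev : R.AnnLevel h q) {i : ℕ} (hi : i < p) : d i ≤ h := by
  obtain ⟨hnh, ⟨v, hv⟩, -, hh, -⟩ := hlev
  by_contra! hdi
  have hzero : ρ (T.I (p * 1 + i)) = 0 := Finsupp.lhom_ext fun k w => by
    rw [hρ.I_single hh, Int.toNat_mul_add_emod hi, Ico_eq_empty_of_le hdi, sum_empty, single_zero,
      LinearMap.zero_apply]
  -- If one `I_b` with `b ≠ 0` acts by zero then all do, yet `I_{pm + i₀}` moves `v` nontrivially.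
  have hall := TwistedHV.map_I_eq_zero_of_map_I_eq_zero ρ hρ.2.2.2.1 (by omega) hzero
  obtain ⟨i₀, hi₀, hid⟩ := exists_lt_eq_dmin hp d
  refine hv ((⊥ : Submodule ℂ R.V).mem_of_sum_pow_div_factorial_smul_mem (g := fun s => R.IV s v)
    (infinite_range_intCast_mul_add hp i₀) (Set.injOn_id _) (Set.forall_mem_range.mpr fun m => ?_)
    (mem_Ico.mpr ⟨hid ▸ hnh, lt_add_one h⟩))
  have := hρ.I_single hh (p * m + i₀) 0 v
  rw [hall, LinearMap.zero_apply, Int.toNat_mul_add_emod hi₀, eq_comm, single_eq_zero] at this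
  simpa using this

theorem eq_top_of_invariant (hp : 0 < p) (hR : R.IsSimple) {h q : ℕ} (hlev : R.AnnLevel h q)
    (hρ : IsTHVAction T p d a R ρ) {W : Submodule ℂ (ℤ →₀ R.V)}
    (hWL : ∀ m, ∀ w ∈ W, ρ (T.L m) w ∈ W) (hWI : ∀ b, ∀ w ∈ W, ρ (T.I b) w ∈ W) (hW : W ≠ ⊥) :
    W = ⊤ := by
  have hh := hlev.2.2.2.1
  let Y : Submodule ℂ R.V := ⨅ k, W.comap (lsingle k)
  have hY : ∀ v, v ∈ Y ↔ ∀ k, single k v ∈ W := by simp [Y, Submodule.mem_iInf]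
  rcases hR.2 Y (fun j v hv => (hY _).2 (hρ.single_LV_mem hlev.2.2.2.2 hWL ((hY v).1 hv) j))
      (fun s hs v hv => (hY _).2 (hρ.single_IV_mem hp hh hWI ((hY v).1 hv) hs)) with hY0 | hYtop
  · obtain ⟨w, hw, hw0⟩ := Submodule.exists_mem_ne_zero_of_ne_bot hW
    obtain ⟨k, hk⟩ : ∃ k, w k ≠ 0 := by
      by_contra! H
      exact hw0 (Finsupp.ext H)
    have hmem : R.IV h (R.IV h (w k)) ∈ Y := (hY _).2 fun k' =>
      hρ.single_IV_IV_mem hp hh (fun i hi => hρ.d_le_of_annLevel hp hlev hi) hWI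
        (hρ.single_apply_mem (hWL 0) hw k) k'
    rw [hY0, Submodule.mem_bot] at hmem
    have hinj := (injective_iff_map_eq_zero _).mp (R.injective_IV_of_annLevel hR hlev)
    exact absurd (hinj _ (hinj _ hmem)) hk
  · refine Submodule.eq_top_iff'.mpr fun w => ?_
    rw [← w.sum_single]
    exact Submodule.finsuppSum_mem _ _ _ _ fun k _ => (hY _).1 (hYtop ▸ Submodule.mem_top) k

end

end IsTHVAction

theorem twisted_thv_module_irreducible_general (p : ℕ) (hp : 1 < p) (T : TwistedHV) (a : ℂ)
    (d : ℕ → ℕ)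
    (R : THVRep (dmin p d)) (hRsim : R.IsSimple) (h q : ℕ) (hlev : R.AnnLevel h q)
    (ρ : T.T →ₗ⁅ℂ⁆ Module.End ℂ (ℤ →₀ R.V)) (hρ : IsTHVAction T p d a R ρ)
    (f : ℤ →₀ ℂ) :
    ∃ ρf : T.T →ₗ⁅ℂ⁆ Module.End ℂ (ℤ →₀ R.V),
      (∀ (m : ℤ) (w : ℤ →₀ R.V),
        ρf (T.L m) w = ρ (T.L m) w + ∑ i ∈ f.support, f i • ρ (T.I (m + i)) w) ∧
      (∀ m : ℤ, ρf (T.I m) = ρ (T.I m)) ∧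
      ρf T.CL = 0 ∧ ρf T.CLI = 0 ∧ ρf T.CI = 0 ∧
      IsIrreducibleRep ρf := by
  let ρf := TwistedHV.twist f hρ.2.2.1 hρ.2.2.2.1 hρ.2.2.2.2
  have hI : ∀ b, ρf (T.I b) = ρ (T.I b) := by simp [ρf]
  refine ⟨ρf, fun m w => by simp [ρf], hI, by simp [ρf], by simp [ρf], by simp [ρf], ?_,
    fun W hW => or_iff_not_imp_left.mpr fun hW0 => ?_⟩
  · obtain ⟨v, hv⟩ := hRsim.1
    exact ⟨Finsupp.single 0 v, by simpa using hv⟩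
  -- `ρ (L m) = ρf (L m) - ∑ f i • ρf (I (m + i))`, so `ρf`-submodules are `ρ`-submodules.
  have hWI : ∀ b, ∀ w ∈ W, ρ (T.I b) w ∈ W := fun b w hw => hI b ▸ hW (T.I b) w hw
  refine hρ.eq_top_of_invariant (by omega) hRsim hlev (fun m w hw => ?_) hWI hW0
  have := hW (T.L m) w hw
  simp only [ρf, TwistedHV.twist_apply, TwistedHV.twistLinear_L, LinearMap.add_apply,
    LinearMap.sum_apply, LinearMap.smul_apply] at this
  exact (W.add_mem_iff_left (W.sum_mem fun i _ => W.smul_mem _ (hWI _ w hw))).mp this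

/-- the twisted action (by `f ∈ ℂ[x^{±1}]`) defines a new `𝔗`-module
structure `M^f(V, a, d)` on `V ⊗ ℂ[x^{±1}]`, and this module is irreducible. -/
theorem twisted_thv_module_irreducible (p : ℕ) (hp : 1 < p) (T : TwistedHV) (a : ℂ)
    (d : ℕ → ℕ) (hd : ∀ i, d i ≤ 1)
    (R : THVRep (dmin p d)) (hRsim : R.IsSimple) (h q : ℕ) (hlev : R.AnnLevel h q)
    (ρ : T.T →ₗ⁅ℂ⁆ Module.End ℂ (ℤ →₀ R.V)) (hρ : IsTHVAction T p d a R ρ)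
    (f : ℤ →₀ ℂ) :
    ∃ ρf : T.T →ₗ⁅ℂ⁆ Module.End ℂ (ℤ →₀ R.V),
      (∀ (m : ℤ) (w : ℤ →₀ R.V),
        ρf (T.L m) w = ρ (T.L m) w + ∑ i ∈ f.support, f i • ρ (T.I (m + i)) w) ∧
      (∀ m : ℤ, ρf (T.I m) = ρ (T.I m)) ∧
      ρf T.CL = 0 ∧ ρf T.CLI = 0 ∧ ρf T.CI = 0 ∧
      IsIrreducibleRep ρf :=
  twisted_thv_module_irreducible_general p hp T a d R hRsim h q hlev ρ hρ f
end
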